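/- Let k be a smooth real function with k_zz = ∂²k/∂z² etc. If the function k_zz̄ · k + k⁴ − k_z k_z̄ is constant, and k is nowhere zero, then there is a real constant H with 2k_zz + ck = Hk, provided c satisfies the conformal Gauss equation c_z̄ = 4(k²)_z; conversely, if 2k_zz + ck = Hk for a constant H (with c as above), then k_zz̄ k + k⁴ − k_z k_z̄ is constant. -/

import Mathlib

/-- Wirtinger derivative `∂_z f = ½(∂_u − i ∂_v) f`. -/
noncomputable def wz (f : ℂ → ℂ) (x : ℂ) : ℂ :=
  (2 : ℂ)⁻¹ • (fderiv ℝ f x 1 - Complex.I • fderiv ℝ f x Complex.I)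

/-- Wirtinger derivative `∂_z̄ f = ½(∂_u + i ∂_v) f`. -/
noncomputable def wzb (f : ℂ → ℂ) (x : ℂ) : ℂ :=
  (2 : ℂ)⁻¹ • (fderiv ℝ f x 1 + Complex.I • fderiv ℝ f x Complex.I)

section helpers
variable {f g : ℂ → ℂ} {x : ℂ}

lemma wz_def (f : ℂ → ℂ) (x : ℂ) :
    wz f x = (2:ℂ)⁻¹ * (fderiv ℝ f x 1 - Complex.I * fderiv ℝ f x Complex.I) := by
  simp [wz, smul_eq_mul]
lemma wzb_def (f : ℂ → ℂ) (x : ℂ) :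
    wzb f x = (2:ℂ)⁻¹ * (fderiv ℝ f x 1 + Complex.I * fderiv ℝ f x Complex.I) := by
  simp [wzb, smul_eq_mul]

lemma wz_add (hf : DifferentiableAt ℝ f x) (hg : DifferentiableAt ℝ g x) :
    wz (fun y => f y + g y) x = wz f x + wz g x := by
  simp only [wz_def, fderiv_fun_add hf hg, ContinuousLinearMap.add_apply]; ring

lemma wzb_add (hf : DifferentiableAt ℝ f x) (hg : DifferentiableAt ℝ g x) :
    wzb (fun y => f y + g y) x = wzb f x + wzb g x := by
  simp only [wzb_def, fderiv_fun_add hf hg, ContinuousLinearMap.add_apply]; ring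

lemma wz_sub (hf : DifferentiableAt ℝ f x) (hg : DifferentiableAt ℝ g x) :
    wz (fun y => f y - g y) x = wz f x - wz g x := by
  simp only [wz_def, fderiv_fun_sub hf hg, ContinuousLinearMap.sub_apply]; ring

lemma wzb_sub (hf : DifferentiableAt ℝ f x) (hg : DifferentiableAt ℝ g x) :
    wzb (fun y => f y - g y) x = wzb f x - wzb g x := by
  simp only [wzb_def, fderiv_fun_sub hf hg, ContinuousLinearMap.sub_apply]; ring

lemma wz_mul (hf : DifferentiableAt ℝ f x) (hg : DifferentiableAt ℝ g x) :
    wz (fun y => f y * g y) x = wz f x * g x + f x * wz g x := by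
  simp only [wz_def, fderiv_fun_mul hf hg, ContinuousLinearMap.add_apply,
    ContinuousLinearMap.smul_apply, smul_eq_mul]; ring

lemma wzb_mul (hf : DifferentiableAt ℝ f x) (hg : DifferentiableAt ℝ g x) :
    wzb (fun y => f y * g y) x = wzb f x * g x + f x * wzb g x := by
  simp only [wzb_def, fderiv_fun_mul hf hg, ContinuousLinearMap.add_apply,
    ContinuousLinearMap.smul_apply, smul_eq_mul]; ring

lemma wz_const (a : ℂ) (x : ℂ) : wz (fun _ => a) x = 0 := by
  simp [wz_def, fderiv_const]

lemma wzb_const (a : ℂ) (x : ℂ) : wzb (fun _ => a) x = 0 := by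
  simp [wzb_def, fderiv_const]

lemma wz_const_mul (hf : DifferentiableAt ℝ f x) (a : ℂ) :
    wz (fun y => a * f y) x = a * wz f x := by
  rw [wz_mul (differentiableAt_const a) hf, wz_const]; ring

lemma wzb_const_mul (hf : DifferentiableAt ℝ f x) (a : ℂ) :
    wzb (fun y => a * f y) x = a * wzb f x := by
  rw [wzb_mul (differentiableAt_const a) hf, wzb_const]; ring

lemma fderiv_conj_apply (hf : DifferentiableAt ℝ f x) (v : ℂ) :
    fderiv ℝ (fun y => (starRingEnd ℂ) (f y)) x v = (starRingEnd ℂ) (fderiv ℝ f x v) := by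
  have h : HasFDerivAt (fun y => (starRingEnd ℂ) (f y))
      ((Complex.conjCLE : ℂ →L[ℝ] ℂ).comp (fderiv ℝ f x)) x := by
    exact (Complex.conjCLE.toContinuousLinearMap.hasFDerivAt).comp x hf.hasFDerivAt
  rw [h.fderiv]; rfl

lemma wz_conj (hf : DifferentiableAt ℝ f x) :
    wz (fun y => (starRingEnd ℂ) (f y)) x = (starRingEnd ℂ) (wzb f x) := by
  simp only [wz_def, wzb_def, fderiv_conj_apply hf, map_mul, map_add, Complex.conj_I, map_inv₀, map_ofNat]
  ring

lemma wzb_conj (hf : DifferentiableAt ℝ f x) :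
    wzb (fun y => (starRingEnd ℂ) (f y)) x = (starRingEnd ℂ) (wz f x) := by
  simp only [wz_def, wzb_def, fderiv_conj_apply hf, map_mul, map_sub, Complex.conj_I, map_inv₀, map_ofNat]
  ring

end helpers

section second
variable {f g : ℂ → ℂ} {x : ℂ}

lemma fderiv_wz_apply (hf : ContDiff ℝ (⊤ : ℕ∞) f) (x w : ℂ) :
    fderiv ℝ (wz f) x w
      = (2:ℂ)⁻¹ * (fderiv ℝ (fderiv ℝ f) x w 1
          - Complex.I * fderiv ℝ (fderiv ℝ f) x w Complex.I) := by
  have hd : DifferentiableAt ℝ (fderiv ℝ f) x :=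
    ((hf.fderiv_right (m := (⊤ : ℕ∞)) (by simp)).differentiable (by simp)) x
  have hA : HasFDerivAt (fun y => fderiv ℝ f y 1)
      ((ContinuousLinearMap.apply ℝ ℂ 1).comp (fderiv ℝ (fderiv ℝ f) x)) x := by
    simpa [Function.comp_def] using
      (ContinuousLinearMap.apply ℝ ℂ (1:ℂ)).hasFDerivAt.comp x hd.hasFDerivAt
  have hB : HasFDerivAt (fun y => fderiv ℝ f y Complex.I)
      ((ContinuousLinearMap.apply ℝ ℂ Complex.I).comp (fderiv ℝ (fderiv ℝ f) x)) x := by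
    simpa [Function.comp_def] using
      (ContinuousLinearMap.apply ℝ ℂ Complex.I).hasFDerivAt.comp x hd.hasFDerivAt
  have h : HasFDerivAt (wz f)
      ((2:ℂ)⁻¹ • (((ContinuousLinearMap.apply ℝ ℂ 1).comp (fderiv ℝ (fderiv ℝ f) x))
        - Complex.I • ((ContinuousLinearMap.apply ℝ ℂ Complex.I).comp
            (fderiv ℝ (fderiv ℝ f) x)))) x :=
    HasFDerivAt.const_smul (hA.sub (hB.const_smul Complex.I)) ((2:ℂ)⁻¹)
  rw [h.fderiv]
  simp [ContinuousLinearMap.apply, smul_eq_mul]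

lemma fderiv_wzb_apply (hf : ContDiff ℝ (⊤ : ℕ∞) f) (x w : ℂ) :
    fderiv ℝ (wzb f) x w
      = (2:ℂ)⁻¹ * (fderiv ℝ (fderiv ℝ f) x w 1
          + Complex.I * fderiv ℝ (fderiv ℝ f) x w Complex.I) := by
  have hd : DifferentiableAt ℝ (fderiv ℝ f) x :=
    ((hf.fderiv_right (m := (⊤ : ℕ∞)) (by simp)).differentiable (by simp)) x
  have hA : HasFDerivAt (fun y => fderiv ℝ f y 1)
      ((ContinuousLinearMap.apply ℝ ℂ 1).comp (fderiv ℝ (fderiv ℝ f) x)) x := by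
    simpa [Function.comp_def] using
      (ContinuousLinearMap.apply ℝ ℂ (1:ℂ)).hasFDerivAt.comp x hd.hasFDerivAt
  have hB : HasFDerivAt (fun y => fderiv ℝ f y Complex.I)
      ((ContinuousLinearMap.apply ℝ ℂ Complex.I).comp (fderiv ℝ (fderiv ℝ f) x)) x := by
    simpa [Function.comp_def] using
      (ContinuousLinearMap.apply ℝ ℂ Complex.I).hasFDerivAt.comp x hd.hasFDerivAt
  have h : HasFDerivAt (wzb f)
      ((2:ℂ)⁻¹ • (((ContinuousLinearMap.apply ℝ ℂ 1).comp (fderiv ℝ (fderiv ℝ f) x))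
        + Complex.I • ((ContinuousLinearMap.apply ℝ ℂ Complex.I).comp
            (fderiv ℝ (fderiv ℝ f) x)))) x :=
    HasFDerivAt.const_smul (hA.add (hB.const_smul Complex.I)) ((2:ℂ)⁻¹)
  rw [h.fderiv]
  simp [ContinuousLinearMap.apply, smul_eq_mul]
  ring

lemma snd_symm (hf : ContDiff ℝ (⊤ : ℕ∞) f) (x v w : ℂ) :
    fderiv ℝ (fderiv ℝ f) x v w = fderiv ℝ (fderiv ℝ f) x w v :=
  second_derivative_symmetric
    (fun y => ((hf.differentiable (by simp)) y).hasFDerivAt)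
    (((hf.fderiv_right (m := (⊤ : ℕ∞)) (by simp)).differentiable (by simp) x).hasFDerivAt) v w

lemma wz_wzb_comm (hf : ContDiff ℝ (⊤ : ℕ∞) f) (x : ℂ) :
    wz (wzb f) x = wzb (wz f) x := by
  rw [wz_def, wzb_def, fderiv_wzb_apply hf, fderiv_wzb_apply hf,
    fderiv_wz_apply hf, fderiv_wz_apply hf, snd_symm hf x 1 Complex.I]
  ring

end second

section more
variable {f g : ℂ → ℂ} {x : ℂ}

lemma wz_sq (hf : DifferentiableAt ℝ f x) :
    wz (fun y => f y ^ 2) x = 2 * f x * wz f x := by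
  have : (fun y => f y ^ 2) = fun y => f y * f y := by funext y; ring
  rw [this, wz_mul hf hf]; ring

lemma wzb_sq (hf : DifferentiableAt ℝ f x) :
    wzb (fun y => f y ^ 2) x = 2 * f x * wzb f x := by
  have : (fun y => f y ^ 2) = fun y => f y * f y := by funext y; ring
  rw [this, wzb_mul hf hf]; ring

lemma wzb_pow4 (hf : DifferentiableAt ℝ f x) :
    wzb (fun y => f y ^ 4) x = 4 * f x ^ 3 * wzb f x := by
  have : (fun y => f y ^ 4) = fun y => (f y * f y) * (f y * f y) := by funext y; ring
  rw [this, wzb_mul (show DifferentiableAt ℝ (fun y => f y * f y) x from hf.mul hf) (show DifferentiableAt ℝ (fun y => f y * f y) x from hf.mul hf), wzb_mul hf hf]; ring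

lemma wz_inv (hf : DifferentiableAt ℝ f x) (hx : f x ≠ 0) :
    wz (fun y => (f y)⁻¹) x = -((f x)⁻¹ * wz f x * (f x)⁻¹) := by
  have h : HasFDerivAt (fun y => (f y)⁻¹)
      ((-ContinuousLinearMap.mulLeftRight ℝ ℂ (f x)⁻¹ (f x)⁻¹).comp (fderiv ℝ f x)) x :=
    (hasFDerivAt_inv' hx).comp x hf.hasFDerivAt
  rw [wz_def, wz_def, h.fderiv]
  simp [ContinuousLinearMap.mulLeftRight_apply]
  ring

lemma wzb_inv (hf : DifferentiableAt ℝ f x) (hx : f x ≠ 0) :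
    wzb (fun y => (f y)⁻¹) x = -((f x)⁻¹ * wzb f x * (f x)⁻¹) := by
  have h : HasFDerivAt (fun y => (f y)⁻¹)
      ((-ContinuousLinearMap.mulLeftRight ℝ ℂ (f x)⁻¹ (f x)⁻¹).comp (fderiv ℝ f x)) x :=
    (hasFDerivAt_inv' hx).comp x hf.hasFDerivAt
  rw [wzb_def, wzb_def, h.fderiv]
  simp [ContinuousLinearMap.mulLeftRight_apply]
  ring

lemma const_of_wz_wzb (hf : Differentiable ℝ f)
    (h1 : ∀ x, wz f x = 0) (h2 : ∀ x, wzb f x = 0) (x y : ℂ) : f x = f y := by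
  apply is_const_of_fderiv_eq_zero hf _ x y
  intro z
  have hz1 := h1 z
  have hz2 := h2 z
  rw [wz_def] at hz1
  rw [wzb_def] at hz2
  have hp : fderiv ℝ f z 1 - Complex.I * fderiv ℝ f z Complex.I = 0 := by
    rcases mul_eq_zero.mp hz1 with h | h
    · norm_num at h
    · exact h
  have hq : fderiv ℝ f z 1 + Complex.I * fderiv ℝ f z Complex.I = 0 := by
    rcases mul_eq_zero.mp hz2 with h | h
    · norm_num at h
    · exact h
  have e1 : fderiv ℝ f z 1 = 0 := by linear_combination hp / 2 + hq / 2
  have eI : fderiv ℝ f z Complex.I = 0 := by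
    have h2I : (2 * Complex.I) * fderiv ℝ f z Complex.I = 0 := by
      linear_combination hq - hp
    rcases mul_eq_zero.mp h2I with h | h
    · exact absurd h (by simp [Complex.I_ne_zero])
    · exact h
  ext v
  have hv : v = v.re • (1:ℂ) + v.im • Complex.I := by
    simp [Complex.real_smul, Complex.re_add_im]
  show fderiv ℝ f z v = 0
  calc fderiv ℝ f z v = fderiv ℝ f z (v.re • (1:ℂ) + v.im • Complex.I) := by rw [← hv]
    _ = 0 := by rw [map_add, map_smul, map_smul, e1, eI]; simp
end more

lemma contDiff_fderiv_apply {f : ℂ → ℂ} (hf : ContDiff ℝ (⊤ : ℕ∞) f) (v : ℂ) :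
    ContDiff ℝ (⊤ : ℕ∞) (fun x => fderiv ℝ f x v) :=
  (hf.fderiv_right (by simp)).clm_apply contDiff_const

lemma wz_smooth {f : ℂ → ℂ} (hf : ContDiff ℝ (⊤ : ℕ∞) f) : ContDiff ℝ (⊤ : ℕ∞) (wz f) :=
  ((contDiff_fderiv_apply hf 1).sub
    ((contDiff_fderiv_apply hf Complex.I).const_smul Complex.I)).const_smul ((2:ℂ)⁻¹)

lemma wzb_smooth {f : ℂ → ℂ} (hf : ContDiff ℝ (⊤ : ℕ∞) f) : ContDiff ℝ (⊤ : ℕ∞) (wzb f) :=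
  ((contDiff_fderiv_apply hf 1).add
    ((contDiff_fderiv_apply hf Complex.I).const_smul Complex.I)).const_smul ((2:ℂ)⁻¹)


/-- Musso–Nicolodi / Burstall–Pedit–Pinkall characterisation: for `k` smooth
real nowhere-zero and `c` satisfying the conformal Gauss equation `c_z̄ = 4(k²)_z` and the
conformal Codazzi equation, there is a real constant `H` with `2k_zz + ck = Hk` if and only
if `k_zz̄ k + k⁴ − k_z k_z̄` is constant. -/
theorem cmc_characterisation
    (k c : ℂ → ℂ)
    (hks : ContDiff ℝ (⊤ : ℕ∞) k) (hcs : ContDiff ℝ (⊤ : ℕ∞) c)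
    (hkreal : ∀ x, (k x).im = 0) (hknz : ∀ x, k x ≠ 0)
    (hGauss : ∀ x, wzb c x = 4 * wz (fun y => (k y) ^ 2) x)
    (hCodazzi : ∀ x, (2 * wzb (wzb k) x + (starRingEnd ℂ) (c x) * k x).im = 0) :
    (∃ H : ℝ, ∀ x, 2 * wz (wz k) x + c x * k x = (H : ℂ) * k x) ↔
      (∃ E : ℝ, ∀ x, wz (wzb k) x * k x + (k x) ^ 4 - wz k x * wzb k x = (E : ℂ)) := by
  -- basic differentiability
  have hkd : Differentiable ℝ k := hks.differentiable (by simp)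
  have hcd : Differentiable ℝ c := hcs.differentiable (by simp)
  have hkzs : ContDiff ℝ (⊤ : ℕ∞) (wz k) := wz_smooth hks
  have hkzbs : ContDiff ℝ (⊤ : ℕ∞) (wzb k) := wzb_smooth hks
  have hkzd : Differentiable ℝ (wz k) := hkzs.differentiable (by simp)
  have hkzbd : Differentiable ℝ (wzb k) := hkzbs.differentiable (by simp)
  have hkzzbs : ContDiff ℝ (⊤ : ℕ∞) (wz (wzb k)) := wz_smooth hkzbs
  have hkzzbd : Differentiable ℝ (wz (wzb k)) := hkzzbs.differentiable (by simp)
  have hkbbs : ContDiff ℝ (⊤ : ℕ∞) (wzb (wzb k)) := wzb_smooth hkzbs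
  have hkbbd : Differentiable ℝ (wzb (wzb k)) := hkbbs.differentiable (by simp)
  have hkzzd : Differentiable ℝ (wz (wz k)) := (wz_smooth hkzs).differentiable (by simp)
  have hccd : Differentiable ℝ (fun y => (starRingEnd ℂ) (c y)) := by
    have := (Complex.conjCLE.toContinuousLinearMap.differentiable).comp hcd
    simpa [Function.comp_def] using this
  -- reality of k
  have hkcx : ∀ x, (starRingEnd ℂ) (k x) = k x := fun x =>
    Complex.conj_eq_iff_im.mpr (hkreal x)
  have hkc : (fun y => (starRingEnd ℂ) (k y)) = k := funext hkcx
  -- conjugates of derivatives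
  have hconjwz : ∀ y, (starRingEnd ℂ) (wz k y) = wzb k y := by
    intro y
    have h := wzb_conj (f := k) (x := y) (hkd y)
    rw [hkc] at h
    exact h.symm
  have hconjwzb : ∀ y, (starRingEnd ℂ) (wzb k y) = wz k y := by
    intro y
    have h := wz_conj (f := k) (x := y) (hkd y)
    rw [hkc] at h
    exact h.symm
  have hcwzb : (fun t => (starRingEnd ℂ) (wzb k t)) = wz k := funext hconjwzb
  have hcwz : (fun t => (starRingEnd ℂ) (wz k t)) = wzb k := funext hconjwz
  have hconj2 : ∀ y, (starRingEnd ℂ) (wz (wzb k) y) = wz (wzb k) y := by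
    intro y
    have h := wzb_conj (f := wzb k) (x := y) (hkzbd y)
    rw [hcwzb] at h
    rw [← h, wz_wzb_comm hks y]
  have hconjbb : ∀ y, (starRingEnd ℂ) (wzb (wzb k) y) = wz (wz k) y := by
    intro y
    have h := wz_conj (f := wzb k) (x := y) (hkzbd y)
    rw [hcwzb] at h
    exact h.symm
  have hconjzz : ∀ y, (starRingEnd ℂ) (wz (wz k) y) = wzb (wzb k) y := by
    intro y
    have h := wzb_conj (f := wz k) (x := y) (hkzd y)
    rw [hcwz] at h
    exact h.symm
  -- Codazzi consequence
  have cod : ∀ x, 2 * wzb (wzb k) x + (starRingEnd ℂ) (c x) * k x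
      = 2 * wz (wz k) x + c x * k x := by
    intro x
    have h := Complex.conj_eq_iff_im.mpr (hCodazzi x)
    calc 2 * wzb (wzb k) x + (starRingEnd ℂ) (c x) * k x
        = (starRingEnd ℂ) (2 * wzb (wzb k) x + (starRingEnd ℂ) (c x) * k x) := h.symm
      _ = 2 * wz (wz k) x + c x * k x := by
          rw [map_add, map_mul, map_mul, map_ofNat, hconjbb x, Complex.conj_conj, hkcx x]
  -- Gauss consequence
  have hwc : ∀ x, wz (fun y => (starRingEnd ℂ) (c y)) x = 8 * k x * wzb k x := by
    intro x
    have h := wz_conj (f := c) (x := x) (hcd x)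
    rw [h, hGauss x, map_mul, map_ofNat]
    have h2 := wzb_conj (f := fun y => k y ^ 2) (x := x) ((hkd x).pow 2)
    have hsq : (fun t => (starRingEnd ℂ) (k t ^ 2)) = fun t => k t ^ 2 := by
      funext t; rw [map_pow, hkcx t]
    rw [hsq] at h2
    rw [← h2, wzb_sq (hkd x)]
    ring
  -- the conserved quantity
  set E₀ : ℂ → ℂ := fun x => wz (wzb k) x * k x + k x ^ 4 - wz k x * wzb k x with hE₀def
  have hE0d : Differentiable ℝ E₀ :=
    ((hkzzbd.mul hkd).add (hkd.pow 4)).sub (hkzd.mul hkzbd)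
  -- generic expansion of wzb E₀
  have hexp : ∀ x, wzb E₀ x
      = wz (wzb (wzb k)) x * k x + 4 * k x ^ 3 * wzb k x - wz k x * wzb (wzb k) x := by
    intro x
    have e1 : wzb E₀ x = wzb (fun y => wz (wzb k) y * k y + k y ^ 4) x
        - wzb (fun y => wz k y * wzb k y) x :=
      wzb_sub ((hkzzbd.mul hkd).add (hkd.pow 4) |>.differentiableAt) ((hkzd.mul hkzbd) x)
    rw [e1, wzb_add ((hkzzbd.fun_mul hkd) x) ((hkd.fun_pow 4) x),
      wzb_mul (hkzzbd x) (hkd x), wzb_pow4 (hkd x), wzb_mul (hkzd x) (hkzbd x)]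
    have c1 : wzb (wz (wzb k)) x = wz (wzb (wzb k)) x := (wz_wzb_comm hkzbs x).symm
    have c2 : wzb (wz k) x = wz (wzb k) x := (wz_wzb_comm hks x).symm
    rw [c1, c2]
    ring
  constructor
  · rintro ⟨H, h⟩
    have hbb : ∀ x, wzb (wzb k) x = (2:ℂ)⁻¹ * ((H:ℂ) * k x - (starRingEnd ℂ) (c x) * k x) := by
      intro x
      have h1 := cod x
      have h2 := h x
      linear_combination h1 / 2 + h2 / 2
    have hfunbb : wzb (wzb k)
        = fun y => (2:ℂ)⁻¹ * ((H:ℂ) * k y - (starRingEnd ℂ) (c y) * k y) := funext hbb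
    have t1 : ∀ x, wz (wzb (wzb k)) x
        = (2:ℂ)⁻¹ * ((H:ℂ) * wz k x - (8 * k x * wzb k x * k x
            + (starRingEnd ℂ) (c x) * wz k x)) := by
      intro x
      rw [hfunbb]
      rw [wz_const_mul (((hkd.const_mul ((H:ℂ))).fun_sub (hccd.fun_mul hkd)) x) ((2:ℂ)⁻¹),
        wz_sub ((hkd.const_mul ((H:ℂ))) x) ((hccd.fun_mul hkd) x),
        wz_const_mul (hkd x) ((H:ℂ)), wz_mul (hccd x) (hkd x), hwc x]
    have hwzbE : ∀ x, wzb E₀ x = 0 := by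
      intro x
      rw [hexp x, t1 x, hbb x]
      ring
    have hE0conj : ∀ x, (starRingEnd ℂ) (E₀ x) = E₀ x := by
      intro x
      simp only [hE₀def]
      rw [map_sub, map_add, map_mul, map_pow, map_mul, hconj2 x, hkcx x,
        hconjwz x, hconjwzb x]
      ring
    have hE0conjfun : (fun y => (starRingEnd ℂ) (E₀ y)) = E₀ := funext hE0conj
    have hwzE : ∀ x, wz E₀ x = 0 := by
      intro x
      have h1 := wz_conj (f := E₀) (x := x) (hE0d x)
      rw [hE0conjfun] at h1
      rw [h1, hwzbE x, map_zero]
    refine ⟨(E₀ 0).re, fun x => ?_⟩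
    have hc : E₀ x = E₀ 0 := const_of_wz_wzb hE0d hwzE hwzbE x 0
    have hr : ((E₀ 0).re : ℂ) = E₀ 0 := Complex.conj_eq_iff_re.mp (hE0conj 0)
    calc wz (wzb k) x * k x + k x ^ 4 - wz k x * wzb k x = E₀ x := rfl
      _ = ((E₀ 0).re : ℂ) := by rw [hc, hr]
  · rintro ⟨E, hE⟩
    set w : ℂ → ℂ := fun x => 2 * wz (wz k) x + c x * k x with hwdef
    have hwd : Differentiable ℝ w := (hkzzd.const_mul 2).add (hcd.mul hkd)
    have hbb' : ∀ x, wzb (wzb k) x = (2:ℂ)⁻¹ * (w x - (starRingEnd ℂ) (c x) * k x) := by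
      intro x
      have h1 := cod x
      simp only [hwdef]
      linear_combination h1 / 2
    have hfunbb' : wzb (wzb k)
        = fun y => (2:ℂ)⁻¹ * (w y - (starRingEnd ℂ) (c y) * k y) := funext hbb'
    have hwconj : ∀ x, (starRingEnd ℂ) (w x) = w x := by
      intro x
      simp only [hwdef]
      rw [map_add, map_mul, map_mul, map_ofNat, hconjzz x, hkcx x]
      exact cod x
    have hwconjfun : (fun y => (starRingEnd ℂ) (w y)) = w := funext hwconj
    have t1' : ∀ x, wz (wzb (wzb k)) x
        = (2:ℂ)⁻¹ * (wz w x - (8 * k x * wzb k x * k x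
            + (starRingEnd ℂ) (c x) * wz k x)) := by
      intro x
      rw [hfunbb']
      rw [wz_const_mul ((hwd.fun_sub (hccd.fun_mul hkd)) x) ((2:ℂ)⁻¹),
        wz_sub (hwd x) ((hccd.fun_mul hkd) x),
        wz_mul (hccd x) (hkd x), hwc x]
    have hwzbE0 : ∀ x, wzb E₀ x = 0 := by
      intro x
      have hfun : E₀ = fun _ => (E:ℂ) := funext hE
      rw [hfun, wzb_const]
    have key1 : ∀ x, wz w x * k x - w x * wz k x = 0 := by
      intro x
      have eq0 : wz (wzb (wzb k)) x * k x + 4 * k x ^ 3 * wzb k x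
          - wz k x * wzb (wzb k) x = 0 := by rw [← hexp x]; exact hwzbE0 x
      rw [t1' x, hbb' x] at eq0
      linear_combination 2 * eq0
    have key2 : ∀ x, wzb w x * k x - w x * wzb k x = 0 := by
      intro x
      have h1 := wzb_conj (f := w) (x := x) (hwd x)
      rw [hwconjfun] at h1
      have h2 := congrArg (starRingEnd ℂ) (key1 x)
      rw [map_sub, map_mul, map_mul, map_zero, hkcx x, hconjwz x, hwconj x, ← h1] at h2
      exact h2
    set q : ℂ → ℂ := fun x => w x * (k x)⁻¹ with hqdef
    have hqd : Differentiable ℝ q := fun x => ((hwd x).mul ((hkd x).inv (hknz x)))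
    have hq1 : ∀ x, wz q x = 0 := by
      intro x
      simp only [hqdef]
      rw [wz_mul (hwd x) ((hkd x).fun_inv (hknz x)), wz_inv (hkd x) (hknz x)]
      have h0 := key1 x
      have hki : k x * (k x)⁻¹ = 1 := mul_inv_cancel₀ (hknz x)
      linear_combination ((k x)⁻¹ * (k x)⁻¹) * h0 - (wz w x * (k x)⁻¹) * hki
    have hq2 : ∀ x, wzb q x = 0 := by
      intro x
      simp only [hqdef]
      rw [wzb_mul (hwd x) ((hkd x).fun_inv (hknz x)), wzb_inv (hkd x) (hknz x)]
      have h0 := key2 x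
      have hki : k x * (k x)⁻¹ = 1 := mul_inv_cancel₀ (hknz x)
      linear_combination ((k x)⁻¹ * (k x)⁻¹) * h0 - (wzb w x * (k x)⁻¹) * hki
    have hqconj : ∀ x, (starRingEnd ℂ) (q x) = q x := by
      intro x
      simp only [hqdef]
      rw [map_mul, map_inv₀, hkcx x, hwconj x]
    refine ⟨(q 0).re, fun x => ?_⟩
    have hc : q x = q 0 := const_of_wz_wzb hqd hq1 hq2 x 0
    have hr : ((q 0).re : ℂ) = q 0 := Complex.conj_eq_iff_re.mp (hqconj 0)
    have : w x = ((q 0).re : ℂ) * k x := by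
      rw [hr, ← hc]
      simp only [hqdef]
      rw [mul_assoc, inv_mul_cancel₀ (hknz x), mul_one]
    simpa only [hwdef] using this
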